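/- Markov's theorem (upper bound restated combinatorially): if d(F) ≤ 2^k − 1 for a system F of Boolean functions, then F can be computed by a circuit over the basis of all monotone Boolean functions together with negation, using at most k negation gates. In particular, I(F) ≤ ⌈log₂(d(F)+1)⌉ where I(F) denotes the minimum number of negations. -/

import Mathlib

/-!
Let `m x` be the largest number of jumps of `F` along an increasing chain ending at `x`. Then `m`
is monotone, `m x ≤ d(F) < 2 ^ k`, and `m` strictly increases across every drop of a member of `F`.
The circuit computes the `k` bits of `m` from the top down, each followed by its negation: given
`x ≤ y` and that the higher bits of `m y` are among those of `m x`, the inequality `m x ≤ m y`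
forces the next bit to increase, so each bit is a monotone function of `x` and the negated higher
bits. Once all negated bits are available, `x ≤ y` with no bit of `m y` missing from `m x` means
`m x = m y`, so no member of `F` drops, and `F` is monotone in `x` and the negated bits.
-/

open Classical in
/-- Number of jumps (1→0 drops of some member of `F`) between consecutive
elements of a list of Boolean tuples. -/
noncomputable def jumps {k : ℕ} (F : Finset ((Fin k → Bool) → Bool)) :
    List (Fin k → Bool) → ℕ
  | a :: b :: t =>
      (if ∃ f ∈ F, f a = true ∧ f b = false then 1 else 0) + jumps F (b :: t)
  | _ => 0

/-- Number of value changes of `h` between consecutive elements of a list. -/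
def changes {k : ℕ} (h : (Fin k → Bool) → Bool) :
    List (Fin k → Bool) → ℕ
  | a :: b :: t => (if h a ≠ h b then 1 else 0) + changes h (b :: t)
  | _ => 0

/-- An increasing chain of pairwise distinct tuples (coordinatewise order). -/
def IsIncChain {k : ℕ} (l : List (Fin k → Bool)) : Prop :=
  l.Chain' (· ≤ ·) ∧ l.Pairwise (· ≠ ·)

/-- The decrease `d(F)` of a system of Boolean functions: the maximum number of
jumps over all increasing chains. -/
noncomputable def decrease {k : ℕ} (F : Finset ((Fin k → Bool) → Bool)) : ℕ :=
  sSup {m | ∃ l, IsIncChain l ∧ jumps F l = m}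

/-- The decrease `d(f)` of a single Boolean function. -/
noncomputable def decrease1 {k : ℕ} (f : (Fin k → Bool) → Bool) : ℕ :=
  decrease {f}
/-- A Boolean circuit over the basis consisting of all monotone Boolean
functions (weight 0) together with the non-monotone basis functions from `Ω`
(weight 1).  Gate `i` may read the `n` inputs and all previous gate values. -/
structure Circuit (n : ℕ) (Ω : Set (Σ m : ℕ, (Fin m → Bool) → Bool)) where
  size : ℕ
  gate : (i : Fin size) → ((Fin (n + i) → Bool) → Bool)
  nonmono : Finset (Fin size)
  mono_ok : ∀ i, i ∉ nonmono → Monotone (gate i)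
  basis_ok : ∀ i ∈ nonmono, ∃ ω ∈ Ω, ∃ sel : Fin ω.1 → Fin (n + i),
      gate i = fun v => ω.2 (fun j => v (sel j))

/-- The value carried by wire `j` of the circuit (wires `0,…,n-1` are the
inputs, wire `n+i` is the output of gate `i`). -/
def Circuit.wire {n : ℕ} {Ω : Set (Σ m : ℕ, (Fin m → Bool) → Bool)}
    (C : Circuit n Ω) (x : Fin n → Bool) (j : ℕ) : Bool :=
  if h : j < n then x ⟨j, h⟩
  else if h2 : j - n < C.size then
    C.gate ⟨j - n, h2⟩ (fun t => C.wire x t.val)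
  else false
termination_by j
decreasing_by
  have ht := t.isLt
  simp only [not_lt] at h
  simp at ht
  omega

/-- The circuit `C` computes the system `F` if every member of `F` appears on
some wire of `C`. -/
def Circuit.Computes {n : ℕ} {Ω : Set (Σ m : ℕ, (Fin m → Bool) → Bool)}
    (C : Circuit n Ω) (F : Finset ((Fin n → Bool) → Bool)) : Prop :=
  ∀ f ∈ F, ∃ o : ℕ, o < n + C.size ∧ ∀ x, f x = C.wire x o

/-- The inversion complexity `I_B(F)`: the minimal number of non-monotone
(weight-1) gates in a circuit over the basis computing the system `F`. -/
noncomputable def invCompl (n : ℕ) (Ω : Set (Σ m : ℕ, (Fin m → Bool) → Bool))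
    (F : Finset ((Fin n → Bool) → Bool)) : ℕ :=
  sInf {k | ∃ C : Circuit n Ω, C.Computes F ∧ C.nonmono.card = k}

/-- The basis `{¬}`: negation as the unique weight-1 basis function. -/
def negBasis : Set (Σ m : ℕ, (Fin m → Bool) → Bool) :=
  {⟨1, fun v => !(v 0)⟩}


section Chains

variable {k : ℕ} (F : Finset ((Fin k → Bool) → Bool))

theorem jumps_cons_cons (a b : Fin k → Bool) (t : List (Fin k → Bool)) :
    jumps F (a :: b :: t) = jumps F [a, b] + jumps F (b :: t) := by
  simp [jumps]

theorem jumps_pair_eq_one {f : (Fin k → Bool) → Bool} (hf : f ∈ F) {a b : Fin k → Bool}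
    (ha : f a = true) (hb : f b = false) : jumps F [a, b] = 1 := by
  simp only [jumps, add_zero]
  exact if_pos ⟨f, hf, ha, hb⟩

theorem jumps_le_length : ∀ l : List (Fin k → Bool), jumps F l ≤ l.length
  | a :: b :: t => by
    have := jumps_le_length (b :: t)
    rw [jumps_cons_cons]
    simp only [jumps, List.length_cons] at this ⊢
    split <;> omega
  | [] | [_] => Nat.zero_le _

theorem jumps_le_card_of_isIncChain {l : List (Fin k → Bool)} (hl : IsIncChain l) :
    jumps F l ≤ Fintype.card (Fin k → Bool) :=
  (jumps_le_length F l).trans (List.Nodup.length_le_card hl.2)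

theorem jumps_append_cons (l t : List (Fin k → Bool)) (x : Fin k → Bool) :
    jumps F (l ++ x :: t) = jumps F (l ++ [x]) + jumps F (x :: t) := by
  induction l with
  | nil => simp [jumps]
  | cons a l ih =>
    cases l with
    | nil => simp [jumps_cons_cons, jumps]
    | cons b l =>
      simp only [List.cons_append] at ih ⊢
      rw [jumps_cons_cons, ih, jumps_cons_cons F a b (l ++ [x])]
      omega

theorem isIncChain_iff_pairwise_lt {l : List (Fin k → Bool)} :
    IsIncChain l ↔ l.Pairwise (· < ·) := by
  change l.IsChain (· ≤ ·) ∧ _ ↔ _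
  rw [List.isChain_iff_pairwise]
  exact ⟨fun ⟨hle, hne⟩ => (hle.and hne).imp fun h => lt_of_le_of_ne h.1 h.2,
    fun h => ⟨h.imp le_of_lt, h.imp ne_of_lt⟩⟩

theorem IsIncChain.append_pair {l : List (Fin k → Bool)} {x y : Fin k → Bool}
    (h : IsIncChain (l ++ [x])) (hxy : x < y) : IsIncChain (l ++ [x, y]) := by
  rw [isIncChain_iff_pairwise_lt, List.pairwise_append] at h ⊢
  obtain ⟨hl, -, hlx⟩ := h
  refine ⟨hl, by simpa using hxy, fun a ha b hb => ?_⟩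
  have hax : a < x := hlx a ha x (List.mem_singleton_self x)
  rcases List.mem_pair.mp hb with rfl | rfl
  exacts [hax, hax.trans hxy]

noncomputable def maxJumpsTo (x : Fin k → Bool) : ℕ :=
  sSup {j | ∃ l, IsIncChain (l ++ [x]) ∧ jumps F (l ++ [x]) = j}

theorem jumps_le_maxJumpsTo {l : List (Fin k → Bool)} {x : Fin k → Bool}
    (hl : IsIncChain (l ++ [x])) : jumps F (l ++ [x]) ≤ maxJumpsTo F x :=
  le_csSup ⟨_, fun _ ⟨_, hl', hj⟩ => hj ▸ jumps_le_card_of_isIncChain F hl'⟩ ⟨l, hl, rfl⟩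

theorem exists_jumps_eq_maxJumpsTo (x : Fin k → Bool) :
    ∃ l, IsIncChain (l ++ [x]) ∧ jumps F (l ++ [x]) = maxJumpsTo F x :=
  Nat.sSup_mem (s := {j | ∃ l, IsIncChain (l ++ [x]) ∧ jumps F (l ++ [x]) = j})
    ⟨jumps F [x], [], by simp [isIncChain_iff_pairwise_lt], rfl⟩
    ⟨_, fun _ ⟨_, hl, hj⟩ => hj ▸ jumps_le_card_of_isIncChain F hl⟩

theorem maxJumpsTo_add_jumps_le {x y : Fin k → Bool} (hxy : x < y) :
    maxJumpsTo F x + jumps F [x, y] ≤ maxJumpsTo F y := by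
  obtain ⟨l, hl, hmax⟩ := exists_jumps_eq_maxJumpsTo F x
  have := jumps_le_maxJumpsTo F (l := l ++ [x]) (by simpa using hl.append_pair hxy)
  rwa [List.append_assoc, List.singleton_append, jumps_append_cons, hmax] at this

theorem monotone_maxJumpsTo : Monotone (maxJumpsTo F) := fun x y hxy => by
  rcases hxy.eq_or_lt with rfl | hlt
  · rfl
  · exact (Nat.le_add_right _ _).trans (maxJumpsTo_add_jumps_le F hlt)

theorem maxJumpsTo_lt_of_drop {f : (Fin k → Bool) → Bool} (hf : f ∈ F) {x y : Fin k → Bool}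
    (hxy : x ≤ y) (hx : f x = true) (hy : f y = false) : maxJumpsTo F x < maxJumpsTo F y := by
  have hlt : x < y := hxy.lt_of_ne fun h => by simp [h, hy] at hx
  have := maxJumpsTo_add_jumps_le F hlt
  rw [jumps_pair_eq_one F hf hx hy] at this
  omega

theorem maxJumpsTo_le_decrease (x : Fin k → Bool) : maxJumpsTo F x ≤ decrease F := by
  obtain ⟨l, hl, hmax⟩ := exists_jumps_eq_maxJumpsTo F x
  exact le_csSup ⟨_, fun _ ⟨_, hl', hj⟩ => hj ▸ jumps_le_card_of_isIncChain F hl'⟩ ⟨_, hl, hmax⟩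

end Chains

/-- The hypotheses force `a` and `b` to agree above position `p`. -/
theorem Nat.testBit_le_testBit_of_le {a b p : ℕ} (hab : a ≤ b)
    (h : ∀ j, p < j → b.testBit j = true → a.testBit j = true) :
    a.testBit p ≤ b.testBit p := by
  have hhigh : a / 2 ^ (p + 1) = b / 2 ^ (p + 1) :=
    le_antisymm (Nat.div_le_div_right hab) <| Nat.le_of_testBit fun j hj => by
      rw [Nat.testBit_div_two_pow] at hj ⊢
      exact h _ (by omega) hj
  have hlow : a / 2 ^ p ≤ b / 2 ^ p := Nat.div_le_div_right hab
  have hsplit : ∀ c, c / 2 ^ p = 2 * (c / 2 ^ (p + 1)) + c / 2 ^ p % 2 := fun c => by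
    rw [pow_succ, ← Nat.div_div_eq_div_mul]; omega
  rw [Nat.testBit_eq_decide_div_mod_eq, Nat.testBit_eq_decide_div_mod_eq]
  have := hsplit a
  have := hsplit b
  have := Nat.mod_lt (a / 2 ^ p) two_pos
  have := Nat.mod_lt (b / 2 ^ p) two_pos
  by_cases ha : a / 2 ^ p % 2 = 1
  · simp only [ha, decide_true, le_refl, show b / 2 ^ p % 2 = 1 by omega]
  · simp [ha]

open Classical in
/-- The least monotone function `G` with `g ≤ G ∘ W`. -/
noncomputable def monoHull {α β : Type*} [Preorder β] (W : α → β) (g : α → Bool) (v : β) : Bool :=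
  decide (∃ y, W y ≤ v ∧ g y = true)

theorem monotone_monoHull {α β : Type*} [Preorder β] (W : α → β) (g : α → Bool) :
    Monotone (monoHull W g) := fun _ _ hvw => by
  simp only [monoHull, Bool.le_iff_imp, decide_eq_true_eq]
  exact fun ⟨y, hy, hgy⟩ => ⟨y, hy.trans hvw, hgy⟩

theorem monoHull_apply {α β : Type*} [Preorder β] {W : α → β} {g : α → Bool}
    (hg : ∀ x y, W x ≤ W y → g x ≤ g y) (x : α) : monoHull W g (W x) = g x := by
  simp only [monoHull]
  rcases hgx : g x
  · simpa using fun y hy => Bool.eq_false_of_le_false (hgx ▸ hg y x hy)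
  · simpa using ⟨x, le_rfl, hgx⟩

namespace Circuit

variable {n : ℕ} {Ω : Set (Σ m : ℕ, (Fin m → Bool) → Bool)}

theorem wire_of_lt (C : Circuit n Ω) (x : Fin n → Bool) {j : ℕ} (hj : j < n) :
    C.wire x j = x ⟨j, hj⟩ := by
  rw [Circuit.wire, dif_pos hj]

theorem wire_add (C : Circuit n Ω) (x : Fin n → Bool) {i : ℕ} (hi : i < C.size) :
    C.wire x (n + i) = C.gate ⟨i, hi⟩ fun t => C.wire x t := by
  have reindex : ∀ i' (hi' : i' < C.size), i' = i →
      C.gate ⟨i', hi'⟩ (fun t => C.wire x t) = C.gate ⟨i, hi⟩ fun t => C.wire x t := by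
    rintro _ _ rfl; rfl
  rw [Circuit.wire, dif_neg (by omega), dif_pos (by omega)]
  exact reindex _ _ (by omega)

end Circuit

section NegCircuit

variable {n : ℕ}

/-- The wire values `x, g 0 x, …, g (i-1) x` seen by gate `i` of a circuit whose gates compute
`g 0, g 1, …`. -/
def prefixWires (g : ℕ → (Fin n → Bool) → Bool) (i : ℕ) (x : Fin n → Bool) :
    Fin (n + i) → Bool :=
  fun t => if h : (t : ℕ) < n then x ⟨t, h⟩ else g (t - n) x

theorem prefixWires_le_iff {g : ℕ → (Fin n → Bool) → Bool} {i : ℕ} {x y : Fin n → Bool} :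
    prefixWires g i x ≤ prefixWires g i y ↔ x ≤ y ∧ ∀ j < i, g j x ≤ g j y := by
  constructor
  · intro h
    refine ⟨fun r => ?_, fun j hj => ?_⟩
    · simpa [prefixWires] using h ⟨r, by omega⟩
    · simpa [prefixWires] using h ⟨n + j, by omega⟩
  · rintro ⟨hxy, hg⟩ t
    by_cases ht : (t : ℕ) < n
    · simpa [prefixWires, ht] using hxy ⟨t, ht⟩
    · simpa [prefixWires, ht] using hg (t - n) (by omega)

noncomputable def negCircuit (s : ℕ) (g : ℕ → (Fin n → Bool) → Bool) (N : Finset ℕ)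
    (hneg : ∀ i ∈ N, ∃ j < i, ∀ x, g i x = !g j x) : Circuit n negBasis where
  size := s
  gate i :=
    if h : (i : ℕ) ∈ N then fun v => !v ⟨n + (hneg i h).choose, by
      have := (hneg i h).choose_spec.1; omega⟩
    else monoHull (prefixWires g i) (g i)
  nonmono := Finset.univ.filter fun i => (i : ℕ) ∈ N
  mono_ok i hi := by
    rw [Finset.mem_filter, not_and] at hi
    rw [dif_neg (hi (Finset.mem_univ i))]
    exact monotone_monoHull _ _
  basis_ok i hi := by
    rw [Finset.mem_filter] at hi
    exact ⟨_, rfl, fun _ => _, by rw [dif_pos hi.2]⟩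

variable {s : ℕ} {g : ℕ → (Fin n → Bool) → Bool} {N : Finset ℕ}
  {hneg : ∀ i ∈ N, ∃ j < i, ∀ x, g i x = !g j x}

theorem card_nonmono_negCircuit_le : (negCircuit s g N hneg).nonmono.card ≤ N.card :=
  Finset.card_le_card_of_injOn Fin.val (fun _ hi => (Finset.mem_filter.mp hi).2)
    Fin.val_injective.injOn

theorem wire_negCircuit
    (hmono : ∀ i < s, i ∉ N → ∀ x y, x ≤ y → (∀ j < i, g j x ≤ g j y) → g i x ≤ g i y) :
    ∀ i < s, ∀ x, (negCircuit s g N hneg).wire x (n + i) = g i x := by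
  intro i
  induction i using Nat.strong_induction_on with
  | _ i ih =>
  intro hi x
  have hprefix : (fun t : Fin (n + i) => (negCircuit s g N hneg).wire x t) =
      prefixWires g i x := by
    funext t
    by_cases ht : (t : ℕ) < n
    · simp [prefixWires, ht, Circuit.wire_of_lt]
    · obtain ⟨j, hj⟩ : ∃ j, (t : ℕ) = n + j := ⟨t - n, by omega⟩
      simp only [prefixWires, dif_neg ht]
      rw [hj, Nat.add_sub_cancel_left, ih j (by omega) (by omega)]
  rw [Circuit.wire_add _ _ hi, hprefix]
  by_cases hN : i ∈ N
  · simp only [negCircuit, dif_pos hN]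
    rw [(hneg i hN).choose_spec.2]
    simp [prefixWires]
  · simp only [negCircuit, dif_neg hN]
    exact monoHull_apply (fun x y hxy => hmono i hi hN x y
      (prefixWires_le_iff.mp hxy).1 (prefixWires_le_iff.mp hxy).2) x

end NegCircuit

section Markov

variable {n : ℕ} (F : Finset ((Fin n → Bool) → Bool)) (k : ℕ)

/-- Gate `2q` computes bit `k - 1 - q` of `maxJumpsTo F`, gate `2q + 1` its negation, and gate
`2k + j` the `j`-th member of `F`. -/
noncomputable def markovWire (i : ℕ) (x : Fin n → Bool) : Bool :=
  if i < 2 * k then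
    if i % 2 = 0 then (maxJumpsTo F x).testBit (k - 1 - i / 2)
    else !(maxJumpsTo F x).testBit (k - 1 - i / 2)
  else F.toList.getD (i - 2 * k) (fun _ => false) x

theorem markovWire_even {q : ℕ} (hq : q < k) (x : Fin n → Bool) :
    markovWire F k (2 * q) x = (maxJumpsTo F x).testBit (k - 1 - q) := by
  simp [markovWire, show 2 * q < 2 * k by omega]

theorem markovWire_odd {q : ℕ} (hq : q < k) (x : Fin n → Bool) :
    markovWire F k (2 * q + 1) x = !(maxJumpsTo F x).testBit (k - 1 - q) := by
  simp [markovWire, show 2 * q + 1 < 2 * k by omega, show (2 * q + 1) / 2 = q by omega]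

theorem markovWire_output (j : ℕ) (x : Fin n → Bool) :
    markovWire F k (2 * k + j) x = F.toList.getD j (fun _ => false) x := by
  simp [markovWire]

def markovNegGates : Finset ℕ :=
  (Finset.range k).image fun q => 2 * q + 1

theorem markovWire_neg :
    ∀ i ∈ markovNegGates k, ∃ j < i, ∀ x, markovWire F k i x = !markovWire F k j x := by
  simp only [markovNegGates, Finset.mem_image, Finset.mem_range]
  rintro _ ⟨q, hq, rfl⟩
  exact ⟨2 * q, by omega, fun x => by rw [markovWire_odd F k hq, markovWire_even F k hq]⟩

noncomputable def markovCircuit : Circuit n negBasis :=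
  negCircuit (2 * k + F.card) (markovWire F k) (markovNegGates k) (markovWire_neg F k)

variable {F k}

theorem testBit_maxJumpsTo_of_markovWire_le (hk : decrease F < 2 ^ k) {q : ℕ} (hq : q ≤ k)
    {x y : Fin n → Bool} (h : ∀ j < 2 * q, markovWire F k j x ≤ markovWire F k j y)
    {p : ℕ} (hp : k - q ≤ p) (hy : (maxJumpsTo F y).testBit p = true) :
    (maxJumpsTo F x).testBit p = true := by
  by_cases hpk : k ≤ p
  · have hlt : maxJumpsTo F y < 2 ^ p :=
      ((maxJumpsTo_le_decrease F y).trans_lt hk).trans_le (Nat.pow_le_pow_right two_pos hpk)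
    rw [Nat.testBit_lt_two_pow hlt] at hy
    exact absurd hy Bool.false_ne_true
  · obtain ⟨q', hq', rfl⟩ : ∃ q' < k, p = k - 1 - q' := ⟨k - 1 - p, by omega, by omega⟩
    have := h (2 * q' + 1) (by omega)
    rw [markovWire_odd F k hq', markovWire_odd F k hq', hy] at this
    simpa using Bool.eq_false_of_le_false this

theorem markovWire_mono (hk : decrease F < 2 ^ k) :
    ∀ i, i ∉ markovNegGates k → ∀ x y, x ≤ y →
      (∀ j < i, markovWire F k j x ≤ markovWire F k j y) →
      markovWire F k i x ≤ markovWire F k i y := by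
  intro i hN x y hxy h
  have hm := monotone_maxJumpsTo F hxy
  rcases lt_or_ge i (2 * k) with hik | hik
  · obtain ⟨q, hq, rfl⟩ : ∃ q < k, i = 2 * q := by
      refine ⟨i / 2, by omega, ?_⟩
      by_contra hodd
      exact hN (Finset.mem_image.mpr ⟨i / 2, Finset.mem_range.mpr (by omega), by omega⟩)
    rw [markovWire_even F k hq, markovWire_even F k hq]
    exact Nat.testBit_le_testBit_of_le hm fun p hp =>
      testBit_maxJumpsTo_of_markovWire_le hk hq.le h (by omega)
  · obtain ⟨j, rfl⟩ : ∃ j, i = 2 * k + j := ⟨i - 2 * k, by omega⟩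
    have hmeq : maxJumpsTo F x = maxJumpsTo F y := hm.antisymm <| Nat.le_of_testBit fun p =>
      testBit_maxJumpsTo_of_markovWire_le hk le_rfl (fun j' hj' => h j' (by omega)) (by omega)
    rw [markovWire_output, markovWire_output]
    set f := F.toList.getD j fun _ => false
    cases hfx : f x
    · exact Bool.false_le _
    cases hfy : f y
    · have hf : f ∈ F := by
        by_cases hj : j < F.toList.length
        · rw [show f = F.toList[j] from List.getD_eq_getElem _ _ hj]
          exact Finset.mem_toList.mp (List.getElem_mem hj)
        · rw [show f = fun _ => false from List.getD_eq_default _ _ (not_lt.mp hj)] at hfx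
          exact absurd hfx Bool.false_ne_true
      exact absurd hmeq (maxJumpsTo_lt_of_drop F hf hxy hfx hfy).ne
    · exact le_rfl

theorem card_nonmono_markovCircuit_le : (markovCircuit F k).nonmono.card ≤ k :=
  card_nonmono_negCircuit_le.trans (Finset.card_image_le.trans (Finset.card_range k).le)

theorem markovCircuit_computes (hk : decrease F < 2 ^ k) : (markovCircuit F k).Computes F := by
  intro f hf
  obtain ⟨j, hj, rfl⟩ := List.mem_iff_getElem.mp (Finset.mem_toList.mpr hf)
  have hjF : j < F.card := F.length_toList ▸ hj
  refine ⟨n + (2 * k + j), by simp [markovCircuit, negCircuit, hjF], fun x => ?_⟩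
  rw [markovCircuit, wire_negCircuit (fun i _ => markovWire_mono hk i) _ (by omega),
    markovWire_output, List.getD_eq_getElem _ _ hj]

end Markov

/-- Markov's theorem, upper bound: if `d(F) ≤ 2^k − 1` then `F`
is computable by a circuit over monotone functions plus negation using at most
`k` negation gates; in particular `I(F) ≤ ⌈log₂(d(F)+1)⌉`. -/
theorem stmt10 (n : ℕ) (F : Finset ((Fin n → Bool) → Bool)) :
    (∀ k : ℕ, decrease F ≤ 2 ^ k - 1 →
      ∃ C : Circuit n negBasis, C.Computes F ∧ C.nonmono.card ≤ k) ∧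
    invCompl n negBasis F ≤ Nat.clog 2 (decrease F + 1) := by
  have markov : ∀ k : ℕ, decrease F ≤ 2 ^ k - 1 →
      ∃ C : Circuit n negBasis, C.Computes F ∧ C.nonmono.card ≤ k := fun k hk =>
    ⟨markovCircuit F k, markovCircuit_computes (by have := Nat.one_le_two_pow (n := k); omega),
      card_nonmono_markovCircuit_le⟩
  refine ⟨markov, ?_⟩
  obtain ⟨C, hC, hcard⟩ := markov (Nat.clog 2 (decrease F + 1)) <| by
    have := Nat.le_pow_clog one_lt_two (decrease F + 1); omega
  exact (Nat.sInf_le ⟨C, hC, rfl⟩ : invCompl n negBasis F ≤ _).trans hcard
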